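/- arXiv:1511.00507 — 4 statements merged into one kernel-verified Lean document; each statement's English description precedes it below -/
import Mathlib

section
/- The difference between the cross-classified variance and the two-stage variance satisfies V_CCS(t̂_Y) − V_DM(t̂_Y) = Σ_{i,j∈U_M} Δ_{ij}^M Σ_{k≠l∈U_D} π_{kl}^D Y̌_{ik} Y̌_{jl}, where V_DM = Σ_{k,l∈U_D} Σ_{i,j∈U_M} Δ_{kl}^D π_i^M π_j^M Y̌_{ik} Y̌_{jl} + Σ_{k∈U_D} Σ_{i,j∈U_M} π_k^D Δ_{ij}^M Y̌_{ik} Y̌_{jk} and V_CCS = Σ_{i,j,k,l} Γ_{ijkl} Y̌_{ik} Y̌_{jl}. -/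
/-- Difference between the cross-classified variance and the two-stage variance `V_DM`. -/
theorem var_ccs_minus_var_dm
    {ιM ιD : Type*} [Fintype ιM] [Fintype ιD] [DecidableEq ιM] [DecidableEq ιD]
    (πM : ιM → ℝ) (πD : ιD → ℝ) (π2M : ιM → ιM → ℝ) (π2D : ιD → ιD → ℝ)
    (hπM : ∀ i, 0 < πM i) (hπD : ∀ k, 0 < πD k)
    (hdiagM : ∀ i, π2M i i = πM i) (hdiagD : ∀ k, π2D k k = πD k)
    (Y : ιM → ιD → ℝ) :
    (∑ i : ιM, ∑ j : ιM, ∑ k : ιD, ∑ l : ιD,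
        (π2M i j * π2D k l - πM i * πM j * πD k * πD l)
          * (Y i k / (πM i * πD k)) * (Y j l / (πM j * πD l)))
      - ((∑ k : ιD, ∑ l : ιD, ∑ i : ιM, ∑ j : ιM,
            (π2D k l - πD k * πD l) * (πM i * πM j)
              * (Y i k / (πM i * πD k)) * (Y j l / (πM j * πD l)))
          + (∑ k : ιD, ∑ i : ιM, ∑ j : ιM,
              πD k * (π2M i j - πM i * πM j)
                * (Y i k / (πM i * πD k)) * (Y j k / (πM j * πD k))))
      = ∑ i : ιM, ∑ j : ιM, (π2M i j - πM i * πM j)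
          * ∑ k : ιD, ∑ l : ιD,
              if k ≠ l then π2D k l * (Y i k / (πM i * πD k)) * (Y j l / (πM j * πD l))
              else 0 := by
  have reorder4 : ∀ (f : ιD → ιD → ιM → ιM → ℝ),
      (∑ k : ιD, ∑ l : ιD, ∑ i : ιM, ∑ j : ιM, f k l i j)
        = ∑ i : ιM, ∑ j : ιM, ∑ k : ιD, ∑ l : ιD, f k l i j := by
    intro f
    calc ∑ k : ιD, ∑ l : ιD, ∑ i : ιM, ∑ j : ιM, f k l i j
        = ∑ k : ιD, ∑ i : ιM, ∑ l : ιD, ∑ j : ιM, f k l i j :=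
          Finset.sum_congr rfl fun k _ => Finset.sum_comm
      _ = ∑ i : ιM, ∑ k : ιD, ∑ l : ιD, ∑ j : ιM, f k l i j := Finset.sum_comm
      _ = ∑ i : ιM, ∑ k : ιD, ∑ j : ιM, ∑ l : ιD, f k l i j :=
          Finset.sum_congr rfl fun i _ => Finset.sum_congr rfl fun k _ => Finset.sum_comm
      _ = ∑ i : ιM, ∑ j : ιM, ∑ k : ιD, ∑ l : ιD, f k l i j :=
          Finset.sum_congr rfl fun i _ => Finset.sum_comm
  have reorder3 : ∀ (f : ιD → ιM → ιM → ℝ),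
      (∑ k : ιD, ∑ i : ιM, ∑ j : ιM, f k i j)
        = ∑ i : ιM, ∑ j : ιM, ∑ k : ιD, f k i j := by
    intro f
    calc ∑ k : ιD, ∑ i : ιM, ∑ j : ιM, f k i j
        = ∑ i : ιM, ∑ k : ιD, ∑ j : ιM, f k i j := Finset.sum_comm
      _ = ∑ i : ιM, ∑ j : ιM, ∑ k : ιD, f k i j :=
          Finset.sum_congr rfl fun i _ => Finset.sum_comm
  rw [reorder4, reorder3]
  rw [← Finset.sum_add_distrib, ← Finset.sum_sub_distrib]
  apply Finset.sum_congr rfl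
  intro i _
  rw [← Finset.sum_add_distrib, ← Finset.sum_sub_distrib]
  apply Finset.sum_congr rfl
  intro j _
  -- rewrite the if-sum as a full sum minus the diagonal
  have hite : ∀ k : ιD,
      (∑ l : ιD, if k ≠ l then π2D k l * (Y i k / (πM i * πD k)) * (Y j l / (πM j * πD l))
        else 0)
      = (∑ l : ιD, π2D k l * (Y i k / (πM i * πD k)) * (Y j l / (πM j * πD l)))
        - π2D k k * (Y i k / (πM i * πD k)) * (Y j k / (πM j * πD k)) := by
    intro k
    have : (∑ l : ιD, if k ≠ l then π2D k l * (Y i k / (πM i * πD k)) * (Y j l / (πM j * πD l))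
        else 0)
      = ∑ l : ιD, (π2D k l * (Y i k / (πM i * πD k)) * (Y j l / (πM j * πD l))
          - if k = l then π2D k l * (Y i k / (πM i * πD k)) * (Y j l / (πM j * πD l)) else 0) := by
      apply Finset.sum_congr rfl
      intro l _
      by_cases h : k = l <;> simp [h]
    rw [this, Finset.sum_sub_distrib, Finset.sum_ite_eq]
    simp
  simp only [hite]
  simp only [hdiagD]
  rw [Finset.mul_sum, ← Finset.sum_add_distrib, ← Finset.sum_sub_distrib]
  apply Finset.sum_congr rfl
  intro k _
  rw [mul_sub (π2M i j - πM i * πM j), Finset.mul_sum,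
    show ∀ a b c : ℝ, a - (b + c) = (a - b) - c from fun a b c => by ring]
  congr 1
  · rw [← Finset.sum_sub_distrib]
    apply Finset.sum_congr rfl
    intro l _
    ring
  · ring
end

section
/- If the design p_M on U_M is Poisson sampling (so Δ_{ij}^M = 0 for i ≠ j and Δ_{ii}^M = π_i^M(1 − π_i^M) ≥ 0), then V_CCS(t̂_Y) − V_DM(t̂_Y) = Σ_{i∈U_M} π_i^M(1−π_i^M) Σ_{k≠l∈U_D} π_{kl}^D Y̌_{ik} Y̌_{il} ≥ 0 whenever Y ≥ 0 and π_{kl}^D ≥ 0, i.e., cross-classified sampling is at most as efficient as the two-stage design DM. -/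
/-- Under Poisson sampling in `U_M`, cross-classified sampling is at most as efficient as the
two-stage design `DM`: the variance difference is an explicit non-negative quantity. -/
theorem ccs_less_efficient_poisson
    {ιM ιD : Type*} [Fintype ιM] [Fintype ιD] [DecidableEq ιM] [DecidableEq ιD]
    (πM : ιM → ℝ) (πD : ιD → ℝ) (π2M : ιM → ιM → ℝ) (π2D : ιD → ιD → ℝ)
    (hπM : ∀ i, 0 < πM i) (hπMle : ∀ i, πM i ≤ 1) (hπD : ∀ k, 0 < πD k)
    (hπ2D : ∀ k l, 0 ≤ π2D k l)
    (hdiagM : ∀ i, π2M i i = πM i)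
    (hPoisson : ∀ i j, i ≠ j → π2M i j = πM i * πM j)
    (Y : ιM → ιD → ℝ) (hY : ∀ i k, 0 ≤ Y i k) :
    (∑ i : ιM, ∑ j : ιM, (π2M i j - πM i * πM j)
        * ∑ k : ιD, ∑ l : ιD,
            if k ≠ l then π2D k l * (Y i k / (πM i * πD k)) * (Y j l / (πM j * πD l))
            else 0)
      = (∑ i : ιM, πM i * (1 - πM i)
          * ∑ k : ιD, ∑ l : ιD,
              if k ≠ l then π2D k l * (Y i k / (πM i * πD k)) * (Y i l / (πM i * πD l))
              else 0)
    ∧ 0 ≤ ∑ i : ιM, ∑ j : ιM, (π2M i j - πM i * πM j)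
          * ∑ k : ιD, ∑ l : ιD,
              if k ≠ l then π2D k l * (Y i k / (πM i * πD k)) * (Y j l / (πM j * πD l))
              else 0 := by
  have heq : (∑ i : ιM, ∑ j : ιM, (π2M i j - πM i * πM j)
        * ∑ k : ιD, ∑ l : ιD,
            if k ≠ l then π2D k l * (Y i k / (πM i * πD k)) * (Y j l / (πM j * πD l))
            else 0)
      = (∑ i : ιM, πM i * (1 - πM i)
          * ∑ k : ιD, ∑ l : ιD,
              if k ≠ l then π2D k l * (Y i k / (πM i * πD k)) * (Y i l / (πM i * πD l))
              else 0) := by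
    refine Finset.sum_congr rfl fun i _ => ?_
    rw [Finset.sum_eq_single i]
    · rw [hdiagM i]; ring
    · intro j _ hji
      rw [hPoisson i j (Ne.symm hji)]
      ring
    · intro h; exact absurd (Finset.mem_univ i) h
  refine ⟨heq, ?_⟩
  rw [heq]
  refine Finset.sum_nonneg fun i _ => mul_nonneg ?_ ?_
  · exact mul_nonneg (hπM i).le (by linarith [hπMle i])
  · refine Finset.sum_nonneg fun k _ => Finset.sum_nonneg fun l _ => ?_
    split
    · refine mul_nonneg (mul_nonneg (hπ2D k l) ?_) ?_ <;>
        exact div_nonneg (hY _ _) (mul_nonneg (hπM i).le (hπD _).le)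
    · exact le_refl 0
end

section
/- Under assumptions (H1)–(H3), the component V_1 = Σ_{i,j∈U_M} Σ_{k,l∈U_D} π_{kl}^D Δ_{ij}^M Y̌_{ik} Y̌_{jl} satisfies V_1 ≤ C · N_D² N_M² / n_M for some constant C depending only on the constants in (H1)–(H3). -/
set_option maxHeartbeats 1000000

/-- Under assumptions (H1)–(H3), the component `V_1` is bounded by
`C · N_D² N_M² / n_M` for a constant `C` depending only on the constants in (H1)–(H3). -/
theorem V1_bound (a1 a2 l1 l2 g1 g2 : ℝ)
    (ha1 : 0 ≤ a1) (ha2 : 0 ≤ a2) (hl1 : 0 < l1) (hl2 : 0 < l2)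
    (hg1 : 0 ≤ g1) (hg2 : 0 ≤ g2) :
    ∃ C : ℝ, 0 < C ∧
      ∀ (UM UD : Finset ℕ) (nM nD : ℕ), 1 ≤ nM → 1 ≤ nD →
      ∀ (πM πD : ℕ → ℝ) (π2M π2D : ℕ → ℕ → ℝ) (Y : ℕ → ℕ → ℝ),
        (∀ i ∈ UM, 0 < πM i ∧ πM i ≤ 1) →
        (∀ k ∈ UD, 0 < πD k ∧ πD k ≤ 1) →
        (∀ i ∈ UM, ∀ j ∈ UM, 0 < π2M i j ∧ π2M i j ≤ 1) →
        (∀ k ∈ UD, ∀ l ∈ UD, 0 < π2D k l ∧ π2D k l ≤ 1) →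
        (∀ i ∈ UM, π2M i i = πM i) → (∀ k ∈ UD, π2D k k = πD k) →
        -- (H1)
        (∀ k ∈ UD, (1 / (UM.card : ℝ)) * ∑ i ∈ UM, (Y i k) ^ 2 ≤ a1) →
        (∀ i ∈ UM, (1 / (UD.card : ℝ)) * ∑ k ∈ UD, (Y i k) ^ 2 ≤ a2) →
        -- (H2)
        (∀ k ∈ UD, l1 * (nD : ℝ) / (UD.card : ℝ) ≤ πD k) →
        (∀ i ∈ UM, l2 * (nM : ℝ) / (UM.card : ℝ) ≤ πM i) →
        -- (H3)
        (∀ k ∈ UD, ∀ l ∈ UD, k ≠ l →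
          ((UD.card : ℝ) ^ 2 / (nD : ℝ)) * |π2D k l - πD k * πD l| ≤ g1) →
        (∀ i ∈ UM, ∀ j ∈ UM, i ≠ j →
          ((UM.card : ℝ) ^ 2 / (nM : ℝ)) * |π2M i j - πM i * πM j| ≤ g2) →
        (∑ i ∈ UM, ∑ j ∈ UM, ∑ k ∈ UD, ∑ l ∈ UD,
            π2D k l * (π2M i j - πM i * πM j)
              * (Y i k / (πM i * πD k)) * (Y j l / (πM j * πD l)))
          ≤ C * (UD.card : ℝ) ^ 2 * (UM.card : ℝ) ^ 2 / (nM : ℝ) := by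
  classical
  obtain ⟨Kc, hKcdef⟩ : ∃ c : ℝ, c = a2 * (1 + g1 / l1 ^ 2) + a2 / l1 + 1 := ⟨_, rfl⟩
  have hKc0 : 0 < Kc := by rw [hKcdef]; positivity
  refine ⟨Kc * (g2 / l2 ^ 2 + 1 / l2), by rw [hKcdef]; positivity, ?_⟩
  intro UM UD nM nD hnM hnD πM πD π2M π2D Y hπM hπD hπ2M hπ2D hdM hdD hH1a hH1b
    hH2D hH2M hH3D hH3M
  set NM : ℝ := (UM.card : ℝ) with hNMdef
  set ND : ℝ := (UD.card : ℝ) with hNDdef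
  have hNM0 : (0:ℝ) ≤ NM := Nat.cast_nonneg _
  have hND0 : (0:ℝ) ≤ ND := Nat.cast_nonneg _
  have hnM0 : (0:ℝ) < (nM : ℝ) := by exact_mod_cast Nat.lt_of_lt_of_le Nat.zero_lt_one hnM
  have hnD0 : (0:ℝ) < (nD : ℝ) := by exact_mod_cast Nat.lt_of_lt_of_le Nat.zero_lt_one hnD
  have hnD1 : (1:ℝ) ≤ (nD : ℝ) := by exact_mod_cast hnD
  have hnM1 : (1:ℝ) ≤ (nM : ℝ) := by exact_mod_cast hnM
  have hNDpos : ∀ k, k ∈ UD → (0:ℝ) < ND := by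
    intro k hk
    have h : 0 < UD.card := Finset.card_pos.mpr ⟨k, hk⟩
    rw [hNDdef]; exact_mod_cast h
  have hNMpos : ∀ i, i ∈ UM → (0:ℝ) < NM := by
    intro i hi
    have h : 0 < UM.card := Finset.card_pos.mpr ⟨i, hi⟩
    rw [hNMdef]; exact_mod_cast h
  -- row sums of squares
  have hRow : ∀ i ∈ UM, (∑ k ∈ UD, (Y i k) ^ 2) ≤ ND * a2 := by
    intro i hi
    rcases UD.eq_empty_or_nonempty with h | h
    · simp [h, hNDdef]
    · have hpos : (0:ℝ) < ND := hNDpos h.choose h.choose_spec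
      have h1 := hH1b i hi
      have h2 := mul_le_mul_of_nonneg_left h1 hND0
      rwa [← mul_assoc, mul_one_div, div_self (ne_of_gt hpos), one_mul] at h2
  -- abs row sums
  have hAbsRow : ∀ i ∈ UM, (∑ k ∈ UD, |Y i k|) ^ 2 ≤ ND ^ 2 * a2 := by
    intro i hi
    have h1 : (∑ k ∈ UD, |Y i k|) ^ 2 ≤ (UD.card : ℝ) * ∑ k ∈ UD, |Y i k| ^ 2 :=
      sq_sum_le_card_mul_sum_sq
    have h2 : (∑ k ∈ UD, |Y i k| ^ 2) = ∑ k ∈ UD, (Y i k) ^ 2 := by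
      refine Finset.sum_congr rfl fun k _ => ?_
      rw [sq_abs]
    calc (∑ k ∈ UD, |Y i k|) ^ 2 ≤ ND * ∑ k ∈ UD, (Y i k) ^ 2 := by rw [← h2]; exact h1
      _ ≤ ND * (ND * a2) := mul_le_mul_of_nonneg_left (hRow i hi) hND0
      _ = ND ^ 2 * a2 := by ring
  -- product row sums
  have hProdRow : ∀ i ∈ UM, ∀ j ∈ UM, (∑ k ∈ UD, |Y i k| * |Y j k|) ≤ ND * a2 := by
    intro i hi j hj
    have h1 : (∑ k ∈ UD, |Y i k| * |Y j k|) ≤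
        ∑ k ∈ UD, ((Y i k) ^ 2 + (Y j k) ^ 2) / 2 := by
      refine Finset.sum_le_sum fun k _ => ?_
      nlinarith [sq_nonneg (|Y i k| - |Y j k|), sq_abs (Y i k), sq_abs (Y j k)]
    have h2 : (∑ k ∈ UD, ((Y i k) ^ 2 + (Y j k) ^ 2) / 2) ≤ ND * a2 := by
      rw [← Finset.sum_div, Finset.sum_add_distrib]
      have := hRow i hi
      have := hRow j hj
      linarith
    linarith
  -- inverse bounds
  have hπDinv : ∀ k ∈ UD, 1 / πD k ≤ ND / (l1 * nD) := by
    intro k hk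
    have hlb := hH2D k hk
    have hNDp := hNDpos k hk
    have hlbpos : (0:ℝ) < l1 * nD / ND := by positivity
    calc 1 / πD k ≤ 1 / (l1 * (nD:ℝ) / ND) := one_div_le_one_div_of_le hlbpos hlb
      _ = ND / (l1 * nD) := by rw [one_div_div]
  have hπMinv : ∀ i ∈ UM, 1 / πM i ≤ NM / (l2 * nM) := by
    intro i hi
    have hlb := hH2M i hi
    have hNMp := hNMpos i hi
    have hlbpos : (0:ℝ) < l2 * nM / NM := by positivity
    calc 1 / πM i ≤ 1 / (l2 * (nM:ℝ) / NM) := one_div_le_one_div_of_le hlbpos hlb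
      _ = NM / (l2 * nM) := by rw [one_div_div]
  -- the D-level double sum bound
  have hT : ∀ i ∈ UM, ∀ j ∈ UM,
      (∑ k ∈ UD, ∑ l ∈ UD, π2D k l * (|Y i k| / πD k) * (|Y j l| / πD l))
        ≤ Kc * ND ^ 2 := by
    intro i hi j hj
    obtain ⟨c1, hc1def⟩ : ∃ c : ℝ, c = 1 + g1 / l1 ^ 2 := ⟨_, rfl⟩
    obtain ⟨c2, hc2def⟩ : ∃ c : ℝ, c = ND / (l1 * nD) := ⟨_, rfl⟩
    have hc1nn : (0:ℝ) ≤ c1 := by rw [hc1def]; positivity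
    have hc2nn : (0:ℝ) ≤ c2 := by rw [hc2def]; positivity
    have key : ∀ k ∈ UD, ∀ l ∈ UD,
        π2D k l * (|Y i k| / πD k) * (|Y j l| / πD l) ≤
          c1 * (|Y i k| * |Y j l|) +
            (if l = k then c2 * (|Y i k| * |Y j l|) else 0) := by
      intro k hk l hl
      have hpk : 0 < πD k := (hπD k hk).1
      have hpl : 0 < πD l := (hπD l hl).1
      by_cases hlk : l = k
      · subst hlk
        rw [if_pos rfl, hdD l hl]
        have hEq : πD l * (|Y i l| / πD l) * (|Y j l| / πD l)
            = (1 / πD l) * (|Y i l| * |Y j l|) := by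
          field_simp
        rw [hEq]
        have h1 : (1 / πD l) * (|Y i l| * |Y j l|) ≤ c2 * (|Y i l| * |Y j l|) := by
          rw [hc2def]
          exact mul_le_mul_of_nonneg_right (hπDinv l hl) (by positivity)
        have h2 : (0:ℝ) ≤ c1 * (|Y i l| * |Y j l|) := mul_nonneg hc1nn (by positivity)
        exact h1.trans (le_add_of_nonneg_left h2)
      · rw [if_neg hlk]
        have hND' : (0:ℝ) < ND := hNDpos k hk
        have h3 := hH3D k hk l hl (fun h => hlk h.symm)
        rw [div_mul_eq_mul_div, div_le_iff₀ hnD0] at h3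
        have hΔdiv : π2D k l - πD k * πD l ≤ g1 * nD / ND ^ 2 := by
          rw [le_div_iff₀ (by positivity : (0:ℝ) < ND ^ 2)]
          nlinarith [le_abs_self (π2D k l - πD k * πD l),
            mul_le_mul_of_nonneg_right (le_abs_self (π2D k l - πD k * πD l))
              (by positivity : (0:ℝ) ≤ ND ^ 2)]
        have hlow : l1 * (nD:ℝ) / ND * (l1 * (nD:ℝ) / ND) ≤ πD k * πD l := by
          have h1 := hH2D k hk
          have h2 := hH2D l hl
          have hp : (0:ℝ) < l1 * nD / ND := by positivity
          exact mul_le_mul h1 h2 (le_of_lt hp) (le_trans (le_of_lt hp) h1)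
        have hgb : g1 * (nD:ℝ) / ND ^ 2 ≤ (g1 / l1 ^ 2) * (πD k * πD l) := by
          rw [div_le_iff₀ (by positivity : (0:ℝ) < ND ^ 2)]
          have heq : (g1 / l1 ^ 2) * (l1 * (nD:ℝ) / ND * (l1 * (nD:ℝ) / ND)) * ND ^ 2
              = g1 * ((nD:ℝ) * nD) := by
            field_simp
          have h2 : (g1 / l1 ^ 2) * (l1 * (nD:ℝ) / ND * (l1 * (nD:ℝ) / ND)) * ND ^ 2
              ≤ (g1 / l1 ^ 2) * (πD k * πD l) * ND ^ 2 :=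
            mul_le_mul_of_nonneg_right
              (mul_le_mul_of_nonneg_left hlow (by positivity)) (by positivity)
          rw [heq] at h2
          have h5 : g1 * (nD:ℝ) ≤ g1 * ((nD:ℝ) * (nD:ℝ)) := by
            nlinarith [mul_nonneg (mul_nonneg hg1 hnD0.le) (sub_nonneg.mpr hnD1)]
          linarith
        have hub : π2D k l ≤ c1 * (πD k * πD l) := by
          rw [hc1def]
          nlinarith [hΔdiv, hgb]
        have hfin : π2D k l * (|Y i k| / πD k) * (|Y j l| / πD l)
            ≤ (c1 * (πD k * πD l)) * ((|Y i k| / πD k) * (|Y j l| / πD l)) := by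
          rw [mul_assoc]
          exact mul_le_mul_of_nonneg_right hub
            (mul_nonneg (div_nonneg (abs_nonneg _) hpk.le) (div_nonneg (abs_nonneg _) hpl.le))
        have heq2 : (c1 * (πD k * πD l)) * ((|Y i k| / πD k) * (|Y j l| / πD l))
            = c1 * (|Y i k| * |Y j l|) := by
          field_simp
        rw [heq2] at hfin
        linarith
    have hsplit : ∀ k ∈ UD,
        (∑ l ∈ UD, (c1 * (|Y i k| * |Y j l|) +
            if l = k then c2 * (|Y i k| * |Y j l|) else 0))
        = c1 * |Y i k| * (∑ l ∈ UD, |Y j l|) + c2 * (|Y i k| * |Y j k|) := by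
      intro k hk
      rw [Finset.sum_add_distrib]
      congr 1
      · rw [Finset.mul_sum]
        exact Finset.sum_congr rfl fun l _ => by ring
      · rw [Finset.sum_ite_eq' UD k (fun l => c2 * (|Y i k| * |Y j l|)), if_pos hk]
    have hstep1 : (∑ k ∈ UD, ∑ l ∈ UD, π2D k l * (|Y i k| / πD k) * (|Y j l| / πD l))
        ≤ ∑ k ∈ UD, (c1 * |Y i k| * (∑ l ∈ UD, |Y j l|) + c2 * (|Y i k| * |Y j k|)) := by
      refine Finset.sum_le_sum fun k hk => ?_
      rw [← hsplit k hk]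
      exact Finset.sum_le_sum fun l hl => key k hk l hl
    have hstep2 : (∑ k ∈ UD, (c1 * |Y i k| * (∑ l ∈ UD, |Y j l|) + c2 * (|Y i k| * |Y j k|)))
        = c1 * ((∑ k ∈ UD, |Y i k|) * (∑ l ∈ UD, |Y j l|)) +
            c2 * (∑ k ∈ UD, |Y i k| * |Y j k|) := by
      rw [Finset.sum_add_distrib]
      congr 1
      · rw [← Finset.sum_mul, ← Finset.mul_sum, mul_assoc]
      · rw [Finset.mul_sum]
    have hxy : (∑ k ∈ UD, |Y i k|) * (∑ l ∈ UD, |Y j l|) ≤ ND ^ 2 * a2 := by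
      have h1 := hAbsRow i hi
      have h2 := hAbsRow j hj
      have h3 : (0:ℝ) ≤ ∑ k ∈ UD, |Y i k| := Finset.sum_nonneg fun k _ => abs_nonneg _
      have h4 : (0:ℝ) ≤ ∑ l ∈ UD, |Y j l| := Finset.sum_nonneg fun l _ => abs_nonneg _
      nlinarith [sq_nonneg ((∑ k ∈ UD, |Y i k|) - (∑ l ∈ UD, |Y j l|))]
    have hc2b : c2 * (∑ k ∈ UD, |Y i k| * |Y j k|) ≤ (a2 / l1) * ND ^ 2 := by
      have h1 : c2 * (∑ k ∈ UD, |Y i k| * |Y j k|) ≤ c2 * (ND * a2) :=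
        mul_le_mul_of_nonneg_left (hProdRow i hi j hj) hc2nn
      have h2 : c2 ≤ ND / l1 := by
        rw [hc2def]
        exact div_le_div_of_nonneg_left hND0 hl1 (by nlinarith)
      have hND2 : (0:ℝ) ≤ ND * a2 := mul_nonneg hND0 ha2
      have h3 : c2 * (ND * a2) ≤ (ND / l1) * (ND * a2) :=
        mul_le_mul_of_nonneg_right h2 hND2
      have h4 : (ND / l1) * (ND * a2) = (a2 / l1) * ND ^ 2 := by ring
      linarith
    have hc1b : c1 * ((∑ k ∈ UD, |Y i k|) * (∑ l ∈ UD, |Y j l|)) ≤ a2 * c1 * ND ^ 2 := by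
      have := mul_le_mul_of_nonneg_left hxy hc1nn
      nlinarith
    have hfinal : a2 * c1 * ND ^ 2 + (a2 / l1) * ND ^ 2 ≤ Kc * ND ^ 2 := by
      rw [hKcdef, hc1def]
      nlinarith [sq_nonneg ND]
    calc (∑ k ∈ UD, ∑ l ∈ UD, π2D k l * (|Y i k| / πD k) * (|Y j l| / πD l))
        ≤ ∑ k ∈ UD, (c1 * |Y i k| * (∑ l ∈ UD, |Y j l|) + c2 * (|Y i k| * |Y j k|)) := hstep1
      _ = c1 * ((∑ k ∈ UD, |Y i k|) * (∑ l ∈ UD, |Y j l|)) +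
            c2 * (∑ k ∈ UD, |Y i k| * |Y j k|) := hstep2
      _ ≤ a2 * c1 * ND ^ 2 + (a2 / l1) * ND ^ 2 := add_le_add hc1b hc2b
      _ ≤ Kc * ND ^ 2 := hfinal
  -- the M-level weight bound
  have hW : ∀ i ∈ UM, ∀ j ∈ UM,
      |π2M i j - πM i * πM j| / (πM i * πM j) ≤
        g2 / (l2 ^ 2 * nM) + (if j = i then NM / (l2 * nM) else 0) := by
    intro i hi j hj
    have hpi : 0 < πM i := (hπM i hi).1
    have hpj : 0 < πM j := (hπM j hj).1
    have hNM' : 0 < NM := hNMpos i hi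
    by_cases hji : j = i
    · subst hji
      rw [if_pos rfl, hdM j hj]
      have hle1 := (hπM j hj).2
      have habs : |πM j - πM j * πM j| = πM j - πM j * πM j := by
        rw [abs_of_nonneg]; nlinarith
      have h1 : |πM j - πM j * πM j| / (πM j * πM j) ≤ πM j / (πM j * πM j) := by
        apply div_le_div_of_nonneg_right ?_ (by positivity)
        rw [habs]; nlinarith
      have h2 : πM j / (πM j * πM j) = 1 / πM j := by
        field_simp
      have h3 := hπMinv j hj
      have h4 : (0:ℝ) ≤ g2 / (l2 ^ 2 * nM) := by positivity
      rw [h2] at h1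
      linarith
    · rw [if_neg hji]
      have h3 := hH3M i hi j hj (fun h => hji h.symm)
      rw [div_mul_eq_mul_div, div_le_iff₀ hnM0] at h3
      have hΔM : |π2M i j - πM i * πM j| ≤ g2 * nM / NM ^ 2 := by
        rw [le_div_iff₀ (by positivity : (0:ℝ) < NM ^ 2)]
        nlinarith
      have e1 : |π2M i j - πM i * πM j| / (πM i * πM j)
          = |π2M i j - πM i * πM j| * (1 / πM i) * (1 / πM j) := by
        field_simp
      rw [e1]
      have hi1 := hπMinv i hi
      have hj1 := hπMinv j hj
      have habs0 : (0:ℝ) ≤ |π2M i j - πM i * πM j| := abs_nonneg _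
      have hstep : |π2M i j - πM i * πM j| * (1 / πM i) * (1 / πM j)
          ≤ (g2 * nM / NM ^ 2) * (NM / (l2 * nM)) * (NM / (l2 * nM)) := by
        have hA : |π2M i j - πM i * πM j| * (1 / πM i)
            ≤ (g2 * nM / NM ^ 2) * (NM / (l2 * nM)) :=
          mul_le_mul hΔM hi1 (by positivity) (by positivity)
        exact mul_le_mul hA hj1 (by positivity) (by positivity)
      have hEq : (g2 * (nM:ℝ) / NM ^ 2) * (NM / (l2 * nM)) * (NM / (l2 * nM))
          = g2 / (l2 ^ 2 * nM) := by
        field_simp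
      rw [hEq] at hstep
      rw [add_zero]
      exact hstep
  -- assemble
  obtain ⟨c, hcdef⟩ : ∃ c : ℝ, c = Kc * ND ^ 2 := ⟨_, rfl⟩
  have hcnn : (0:ℝ) ≤ c := by rw [hcdef]; exact mul_nonneg hKc0.le (sq_nonneg _)
  have hInner : ∀ i ∈ UM, ∀ j ∈ UM,
      (∑ k ∈ UD, ∑ l ∈ UD,
          π2D k l * (π2M i j - πM i * πM j)
            * (Y i k / (πM i * πD k)) * (Y j l / (πM j * πD l)))
        ≤ (|π2M i j - πM i * πM j| / (πM i * πM j)) * c := by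
    intro i hi j hj
    have hpi : 0 < πM i := (hπM i hi).1
    have hpj : 0 < πM j := (hπM j hj).1
    set w : ℝ := |π2M i j - πM i * πM j| / (πM i * πM j) with hwdef
    have hwnn : (0:ℝ) ≤ w := by positivity
    have hpt : ∀ k ∈ UD, ∀ l ∈ UD,
        π2D k l * (π2M i j - πM i * πM j)
            * (Y i k / (πM i * πD k)) * (Y j l / (πM j * πD l))
          ≤ w * (π2D k l * (|Y i k| / πD k) * (|Y j l| / πD l)) := by
      intro k hk l hl
      have hpk : 0 < πD k := (hπD k hk).1
      have hpl : 0 < πD l := (hπD l hl).1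
      have h2Dp : 0 < π2D k l := (hπ2D k hk l hl).1
      have habs : |π2D k l * (π2M i j - πM i * πM j)
            * (Y i k / (πM i * πD k)) * (Y j l / (πM j * πD l))|
          = w * (π2D k l * (|Y i k| / πD k) * (|Y j l| / πD l)) := by
        rw [abs_mul, abs_mul, abs_mul, abs_div, abs_div,
          abs_of_pos h2Dp, abs_of_pos (mul_pos hpi hpk), abs_of_pos (mul_pos hpj hpl),
          hwdef]
        field_simp
      calc π2D k l * (π2M i j - πM i * πM j)
            * (Y i k / (πM i * πD k)) * (Y j l / (πM j * πD l))
          ≤ |π2D k l * (π2M i j - πM i * πM j)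
              * (Y i k / (πM i * πD k)) * (Y j l / (πM j * πD l))| := le_abs_self _
        _ = w * (π2D k l * (|Y i k| / πD k) * (|Y j l| / πD l)) := habs
    have hsum : (∑ k ∈ UD, ∑ l ∈ UD,
          π2D k l * (π2M i j - πM i * πM j)
            * (Y i k / (πM i * πD k)) * (Y j l / (πM j * πD l)))
        ≤ ∑ k ∈ UD, ∑ l ∈ UD, w * (π2D k l * (|Y i k| / πD k) * (|Y j l| / πD l)) :=
      Finset.sum_le_sum fun k hk => Finset.sum_le_sum fun l hl => hpt k hk l hl
    have heq : (∑ k ∈ UD, ∑ l ∈ UD, w * (π2D k l * (|Y i k| / πD k) * (|Y j l| / πD l)))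
        = w * ∑ k ∈ UD, ∑ l ∈ UD, π2D k l * (|Y i k| / πD k) * (|Y j l| / πD l) := by
      rw [Finset.mul_sum]
      exact Finset.sum_congr rfl fun k _ => (Finset.mul_sum _ _ _).symm
    rw [heq] at hsum
    calc (∑ k ∈ UD, ∑ l ∈ UD,
          π2D k l * (π2M i j - πM i * πM j)
            * (Y i k / (πM i * πD k)) * (Y j l / (πM j * πD l)))
        ≤ w * ∑ k ∈ UD, ∑ l ∈ UD, π2D k l * (|Y i k| / πD k) * (|Y j l| / πD l) := hsum
      _ ≤ w * c := by
          rw [hcdef]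
          exact mul_le_mul_of_nonneg_left (hT i hi j hj) hwnn
  have hWc : ∀ i ∈ UM, ∀ j ∈ UM,
      (|π2M i j - πM i * πM j| / (πM i * πM j)) * c ≤
        g2 / (l2 ^ 2 * nM) * c + (if j = i then NM / (l2 * nM) * c else 0) := by
    intro i hi j hj
    have h := mul_le_mul_of_nonneg_right (hW i hi j hj) hcnn
    by_cases hji : j = i
    · rw [if_pos hji] at h ⊢
      rw [add_mul] at h
      exact h
    · simp only [if_neg hji, add_zero] at h ⊢
      exact h
  have hSum1 : (∑ i ∈ UM, ∑ j ∈ UM, ∑ k ∈ UD, ∑ l ∈ UD,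
        π2D k l * (π2M i j - πM i * πM j)
          * (Y i k / (πM i * πD k)) * (Y j l / (πM j * πD l)))
      ≤ ∑ i ∈ UM, ∑ j ∈ UM,
          (g2 / (l2 ^ 2 * nM) * c + (if j = i then NM / (l2 * nM) * c else 0)) := by
    refine Finset.sum_le_sum fun i hi => Finset.sum_le_sum fun j hj => ?_
    exact le_trans (hInner i hi j hj) (hWc i hi j hj)
  have hSum2 : (∑ i ∈ UM, ∑ j ∈ UM,
        (g2 / (l2 ^ 2 * nM) * c + (if j = i then NM / (l2 * nM) * c else 0)))
      = NM * (NM * (g2 / (l2 ^ 2 * nM) * c)) + NM * (NM / (l2 * nM) * c) := by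
    have hin : ∀ i ∈ UM, (∑ j ∈ UM,
        (g2 / (l2 ^ 2 * nM) * c + (if j = i then NM / (l2 * nM) * c else 0)))
        = NM * (g2 / (l2 ^ 2 * nM) * c) + NM / (l2 * nM) * c := by
      intro i hi
      rw [Finset.sum_add_distrib, Finset.sum_const, nsmul_eq_mul,
        Finset.sum_ite_eq' UM i (fun _ => NM / (l2 * nM) * c), if_pos hi]
    rw [Finset.sum_congr rfl hin, Finset.sum_const, nsmul_eq_mul, mul_add]
  have hEqFinal : NM * (NM * (g2 / (l2 ^ 2 * nM) * c)) + NM * (NM / (l2 * nM) * c)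
      = Kc * (g2 / l2 ^ 2 + 1 / l2) * ND ^ 2 * NM ^ 2 / nM := by
    rw [hcdef]
    field_simp
  calc (∑ i ∈ UM, ∑ j ∈ UM, ∑ k ∈ UD, ∑ l ∈ UD,
        π2D k l * (π2M i j - πM i * πM j)
          * (Y i k / (πM i * πD k)) * (Y j l / (πM j * πD l)))
      ≤ ∑ i ∈ UM, ∑ j ∈ UM,
          (g2 / (l2 ^ 2 * nM) * c + (if j = i then NM / (l2 * nM) * c else 0)) := hSum1
    _ = NM * (NM * (g2 / (l2 ^ 2 * nM) * c)) + NM * (NM / (l2 * nM) * c) := hSum2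
    _ = Kc * (g2 / l2 ^ 2 + 1 / l2) * ND ^ 2 * NM ^ 2 / nM := hEqFinal
end

section
/- Under assumptions (H1)–(H3), the component V_3 = Σ_{i,j∈U_M} Σ_{k,l∈U_D} Δ_{ij}^M Δ_{kl}^D Y̌_{ik} Y̌_{jl} satisfies |V_3| ≤ C · N_D² N_M² / (n_M n_D) for some constant C depending only on the constants in (H1)–(H3). -/
lemma V3_rowsum (U : Finset ℕ) (n : ℕ) (π : ℕ → ℝ) (Δ : ℕ → ℕ → ℝ) (l g : ℝ)
    (hl : 0 < l) (hg : 0 ≤ g) (hn : (0:ℝ) < n)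
    (hdiag : ∀ i ∈ U, |Δ i i| ≤ π i)
    (hoff : ∀ i ∈ U, ∀ j ∈ U, i ≠ j → |Δ i j| ≤ g * n / (U.card:ℝ)^2)
    (hH2 : ∀ i ∈ U, l * n / (U.card:ℝ) ≤ π i)
    {i : ℕ} (hi : i ∈ U) :
    ∑ j ∈ U, |Δ i j| ≤ (1/l + g/l^2) * ((U.card:ℝ)/n) * (π i)^2 := by
  have hN : (1:ℝ) ≤ U.card := by
    exact_mod_cast Finset.card_pos.mpr ⟨i, hi⟩
  have hN0 : (0:ℝ) < U.card := by linarith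
  have hp : l * n / (U.card:ℝ) ≤ π i := hH2 i hi
  have hppos : 0 < π i := lt_of_lt_of_le (by positivity) hp
  have hpn : l * n ≤ π i * (U.card:ℝ) := (div_le_iff₀ hN0).mp hp
  have hsplit : ∑ j ∈ U, |Δ i j| = |Δ i i| + ∑ j ∈ U.erase i, |Δ i j| :=
    (Finset.add_sum_erase U _ hi).symm
  have herase : ∑ j ∈ U.erase i, |Δ i j| ≤ (U.card:ℝ) * (g * n / (U.card:ℝ)^2) := by
    calc ∑ j ∈ U.erase i, |Δ i j| ≤ (U.erase i).card • (g * n / (U.card:ℝ)^2) :=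
          Finset.sum_le_card_nsmul _ _ _ (fun j hj =>
            hoff i hi j (Finset.mem_of_mem_erase hj) (Finset.ne_of_mem_erase hj).symm)
      _ = ((U.erase i).card : ℝ) * (g * n / (U.card:ℝ)^2) := by rw [nsmul_eq_mul]
      _ ≤ (U.card:ℝ) * (g * n / (U.card:ℝ)^2) := by
          apply mul_le_mul_of_nonneg_right _ (by positivity)
          exact_mod_cast Finset.card_le_card (Finset.erase_subset _ _)
  have hstep : ∑ j ∈ U, |Δ i j| ≤ π i + g * n / (U.card:ℝ) := by
    rw [hsplit]
    have h1 := hdiag i hi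
    have h2 : (U.card:ℝ) * (g * n / (U.card:ℝ)^2) = g * n / (U.card:ℝ) := by
      field_simp
    linarith [herase]
  refine hstep.trans ?_
  have hA : π i ≤ (1/l) * ((U.card:ℝ)/n) * (π i)^2 := by
    have h1 : 1 ≤ π i * (U.card:ℝ) / (l * n) := (one_le_div (by positivity)).mpr hpn
    calc π i = π i * 1 := by ring
      _ ≤ π i * (π i * (U.card:ℝ) / (l * n)) := by
          exact mul_le_mul_of_nonneg_left h1 hppos.le
      _ = (1/l) * ((U.card:ℝ)/n) * (π i)^2 := by field_simp
  have hB : g * n / (U.card:ℝ) ≤ (g/l^2) * ((U.card:ℝ)/n) * (π i)^2 := by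
    have hp2 : (l * n / (U.card:ℝ))^2 ≤ (π i)^2 := by
      apply pow_le_pow_left₀ (by positivity) hp
    calc g * n / (U.card:ℝ) = (g/l^2) * ((U.card:ℝ)/n) * (l * n / (U.card:ℝ))^2 := by
          field_simp
      _ ≤ (g/l^2) * ((U.card:ℝ)/n) * (π i)^2 := by
          exact mul_le_mul_of_nonneg_left hp2 (by positivity)
  calc π i + g * n / (U.card:ℝ)
      ≤ (1/l) * ((U.card:ℝ)/n) * (π i)^2 + (g/l^2) * ((U.card:ℝ)/n) * (π i)^2 :=
        add_le_add hA hB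
    _ = (1/l + g/l^2) * ((U.card:ℝ)/n) * (π i)^2 := by ring

lemma V3_block (U V : Finset ℕ) (A : ℕ → ℝ) (B : ℕ → ℕ → ℝ) (c : ℕ → ℝ)
    (α : ℝ) (β : ℕ → ℝ) (q : ℝ)
    (hA0 : ∀ x ∈ U, 0 ≤ A x) (hc0 : ∀ y ∈ V, 0 ≤ c y)
    (hA : ∑ x ∈ U, A x ≤ α)
    (hB : ∀ y ∈ V, ∑ z ∈ V, B y z ≤ β y)
    (hq : ∑ y ∈ V, c y * β y ≤ q) (hq0 : 0 ≤ q) :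
    ∑ x ∈ U, ∑ y ∈ V, ∑ z ∈ V, A x * (B y z * c y) ≤ α * q := by
  have hinner : ∀ x ∈ U, ∑ y ∈ V, ∑ z ∈ V, A x * (B y z * c y) ≤ A x * q := by
    intro x hx
    have h1 : ∀ y ∈ V, ∑ z ∈ V, A x * (B y z * c y) ≤ A x * (c y * β y) := by
      intro y hy
      have : ∑ z ∈ V, A x * (B y z * c y) = A x * (c y * ∑ z ∈ V, B y z) := by
        rw [Finset.mul_sum, Finset.mul_sum]
        exact Finset.sum_congr rfl fun z _ => by ring
      rw [this]
      exact mul_le_mul_of_nonneg_left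
        (mul_le_mul_of_nonneg_left (hB y hy) (hc0 y hy)) (hA0 x hx)
    calc ∑ y ∈ V, ∑ z ∈ V, A x * (B y z * c y) ≤ ∑ y ∈ V, A x * (c y * β y) :=
          Finset.sum_le_sum h1
      _ = A x * ∑ y ∈ V, c y * β y := by rw [Finset.mul_sum]
      _ ≤ A x * q := mul_le_mul_of_nonneg_left hq (hA0 x hx)
  calc ∑ x ∈ U, ∑ y ∈ V, ∑ z ∈ V, A x * (B y z * c y) ≤ ∑ x ∈ U, A x * q :=
        Finset.sum_le_sum hinner
    _ = (∑ x ∈ U, A x) * q := by rw [Finset.sum_mul]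
    _ ≤ α * q := mul_le_mul_of_nonneg_right hA hq0

set_option maxHeartbeats 2000000 in
/-- Under assumptions (H1)–(H3), the component `V_3` is bounded in absolute value by
`C · N_D² N_M² / (n_M n_D)` for a constant `C` depending only on the constants in (H1)–(H3). -/
theorem V3_bound (a1 a2 l1 l2 g1 g2 : ℝ)
    (ha1 : 0 ≤ a1) (ha2 : 0 ≤ a2) (hl1 : 0 < l1) (hl2 : 0 < l2)
    (hg1 : 0 ≤ g1) (hg2 : 0 ≤ g2) :
    ∃ C : ℝ, 0 < C ∧
      ∀ (UM UD : Finset ℕ) (nM nD : ℕ), 1 ≤ nM → 1 ≤ nD →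
      ∀ (πM πD : ℕ → ℝ) (π2M π2D : ℕ → ℕ → ℝ) (Y : ℕ → ℕ → ℝ),
        (∀ i ∈ UM, 0 < πM i ∧ πM i ≤ 1) →
        (∀ k ∈ UD, 0 < πD k ∧ πD k ≤ 1) →
        (∀ i ∈ UM, ∀ j ∈ UM, 0 < π2M i j ∧ π2M i j ≤ 1) →
        (∀ k ∈ UD, ∀ l ∈ UD, 0 < π2D k l ∧ π2D k l ≤ 1) →
        (∀ i ∈ UM, π2M i i = πM i) → (∀ k ∈ UD, π2D k k = πD k) →
        -- (H1)
        (∀ k ∈ UD, (1 / (UM.card : ℝ)) * ∑ i ∈ UM, (Y i k) ^ 2 ≤ a1) →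
        (∀ i ∈ UM, (1 / (UD.card : ℝ)) * ∑ k ∈ UD, (Y i k) ^ 2 ≤ a2) →
        -- (H2)
        (∀ k ∈ UD, l1 * (nD : ℝ) / (UD.card : ℝ) ≤ πD k) →
        (∀ i ∈ UM, l2 * (nM : ℝ) / (UM.card : ℝ) ≤ πM i) →
        -- (H3)
        (∀ k ∈ UD, ∀ l ∈ UD, k ≠ l →
          ((UD.card : ℝ) ^ 2 / (nD : ℝ)) * |π2D k l - πD k * πD l| ≤ g1) →
        (∀ i ∈ UM, ∀ j ∈ UM, i ≠ j →
          ((UM.card : ℝ) ^ 2 / (nM : ℝ)) * |π2M i j - πM i * πM j| ≤ g2) →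
        |∑ i ∈ UM, ∑ j ∈ UM, ∑ k ∈ UD, ∑ l ∈ UD,
            (π2M i j - πM i * πM j) * (π2D k l - πD k * πD l)
              * (Y i k / (πM i * πD k)) * (Y j l / (πM j * πD l))|
          ≤ C * (UD.card : ℝ) ^ 2 * (UM.card : ℝ) ^ 2 / ((nM : ℝ) * (nD : ℝ)) := by
  refine ⟨(1/l2 + g2/l2^2) * (1/l1 + g1/l1^2) * (a2 + 1), by positivity, ?_⟩
  intro UM UD nM nD hnM hnD πM πD π2M π2D Y hπM hπD hπ2M hπ2D hdM hdD hH1a hH1b hH2D hH2M hH3D hH3M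
  have hnM0 : (0:ℝ) < nM := by exact_mod_cast hnM
  have hnD0 : (0:ℝ) < nD := by exact_mod_cast hnD
  rcases UM.eq_empty_or_nonempty with rfl | hUM
  · simp
  rcases UD.eq_empty_or_nonempty with rfl | hUD
  · simp
  have hNM1 : (1:ℝ) ≤ UM.card := by exact_mod_cast Finset.card_pos.mpr hUM
  have hND1 : (1:ℝ) ≤ UD.card := by exact_mod_cast Finset.card_pos.mpr hUD
  have hNM0 : (0:ℝ) < UM.card := by linarith
  have hND0 : (0:ℝ) < UD.card := by linarith
  -- diagonal and off-diagonal bounds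
  have hdiagM : ∀ i ∈ UM, |π2M i i - πM i * πM i| ≤ πM i := by
    intro i hi
    obtain ⟨h0, h1⟩ := hπM i hi
    rw [hdM i hi, abs_of_nonneg (by nlinarith)]
    nlinarith
  have hdiagD : ∀ k ∈ UD, |π2D k k - πD k * πD k| ≤ πD k := by
    intro k hk
    obtain ⟨h0, h1⟩ := hπD k hk
    rw [hdD k hk, abs_of_nonneg (by nlinarith)]
    nlinarith
  have hoffM : ∀ i ∈ UM, ∀ j ∈ UM, i ≠ j →
      |π2M i j - πM i * πM j| ≤ g2 * nM / (UM.card:ℝ)^2 := by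
    intro i hi j hj hij
    have h := hH3M i hi j hj hij
    calc |π2M i j - πM i * πM j|
        = ((UM.card:ℝ)^2/nM * |π2M i j - πM i * πM j|) * (nM/(UM.card:ℝ)^2) := by
          field_simp
      _ ≤ g2 * (nM/(UM.card:ℝ)^2) := mul_le_mul_of_nonneg_right h (by positivity)
      _ = g2 * nM / (UM.card:ℝ)^2 := by ring
  have hoffD : ∀ k ∈ UD, ∀ l ∈ UD, k ≠ l →
      |π2D k l - πD k * πD l| ≤ g1 * nD / (UD.card:ℝ)^2 := by
    intro k hk l hl hkl
    have h := hH3D k hk l hl hkl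
    calc |π2D k l - πD k * πD l|
        = ((UD.card:ℝ)^2/nD * |π2D k l - πD k * πD l|) * (nD/(UD.card:ℝ)^2) := by
          field_simp
      _ ≤ g1 * (nD/(UD.card:ℝ)^2) := mul_le_mul_of_nonneg_right h (by positivity)
      _ = g1 * nD / (UD.card:ℝ)^2 := by ring
  -- row and column sums of |Δ|
  have hrowD : ∀ k ∈ UD, ∑ l ∈ UD, |π2D k l - πD k * πD l|
      ≤ (1/l1 + g1/l1^2) * ((UD.card:ℝ)/nD) * (πD k)^2 :=
    fun k hk => V3_rowsum UD nD πD (fun k l => π2D k l - πD k * πD l) l1 g1 hl1 hg1 hnD0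
      hdiagD hoffD hH2D hk
  have hcolD : ∀ l ∈ UD, ∑ k ∈ UD, |π2D k l - πD k * πD l|
      ≤ (1/l1 + g1/l1^2) * ((UD.card:ℝ)/nD) * (πD l)^2 :=
    fun l hl => V3_rowsum UD nD πD (fun l k => π2D k l - πD k * πD l) l1 g1 hl1 hg1 hnD0
      hdiagD (fun a ha b hb hab => hoffD b hb a ha hab.symm) hH2D hl
  have hrowM : ∀ i ∈ UM, ∑ j ∈ UM, |π2M i j - πM i * πM j|
      ≤ (1/l2 + g2/l2^2) * ((UM.card:ℝ)/nM) * (πM i)^2 :=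
    fun i hi => V3_rowsum UM nM πM (fun i j => π2M i j - πM i * πM j) l2 g2 hl2 hg2 hnM0
      hdiagM hoffM hH2M hi
  have hcolM : ∀ j ∈ UM, ∑ i ∈ UM, |π2M i j - πM i * πM j|
      ≤ (1/l2 + g2/l2^2) * ((UM.card:ℝ)/nM) * (πM j)^2 :=
    fun j hj => V3_rowsum UM nM πM (fun j i => π2M i j - πM i * πM j) l2 g2 hl2 hg2 hnM0
      hdiagM (fun a ha b hb hab => hoffM b hb a ha hab.symm) hH2M hj
  -- (H1) row sums of Y²
  have hsumY2 : ∀ i ∈ UM, ∑ k ∈ UD, (Y i k)^2 ≤ (UD.card:ℝ) * a2 := by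
    intro i hi
    have h := hH1b i hi
    calc ∑ k ∈ UD, (Y i k)^2
        = (UD.card:ℝ) * ((1/(UD.card:ℝ)) * ∑ k ∈ UD, (Y i k)^2) := by field_simp
      _ ≤ (UD.card:ℝ) * a2 := mul_le_mul_of_nonneg_left h hND0.le
  -- generic block bound
  have hblock : ∀ m ∈ UM, ∀ A : ℕ → ℝ, (∀ x ∈ UM, 0 ≤ A x) →
      (∑ x ∈ UM, A x ≤ (1/l2 + g2/l2^2) * ((UM.card:ℝ)/nM) * (πM m)^2) →
      ∀ B : ℕ → ℕ → ℝ,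
      (∀ y ∈ UD, ∑ z ∈ UD, B y z ≤ (1/l1 + g1/l1^2) * ((UD.card:ℝ)/nD) * (πD y)^2) →
      ∑ x ∈ UM, ∑ y ∈ UD, ∑ z ∈ UD, A x * (B y z * ((Y m y / (πM m * πD y))^2/2))
        ≤ (1/l2 + g2/l2^2) * (1/l1 + g1/l1^2)
            * ((UM.card:ℝ)/nM) * ((UD.card:ℝ)/nD) * ((UD.card:ℝ) * a2) / 2 := by
    intro m hm A hA0 hA B hB
    have hπm : 0 < πM m := (hπM m hm).1
    have hq : ∑ y ∈ UD, ((Y m y / (πM m * πD y))^2/2)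
          * ((1/l1 + g1/l1^2) * ((UD.card:ℝ)/nD) * (πD y)^2)
        ≤ ((1/l1 + g1/l1^2) * ((UD.card:ℝ)/nD) / (2 * (πM m)^2)) * ((UD.card:ℝ) * a2) := by
      have heq : ∀ y ∈ UD, ((Y m y / (πM m * πD y))^2/2)
            * ((1/l1 + g1/l1^2) * ((UD.card:ℝ)/nD) * (πD y)^2)
          = ((1/l1 + g1/l1^2) * ((UD.card:ℝ)/nD) / (2 * (πM m)^2)) * (Y m y)^2 := by
        intro y hy
        have hy0 : (0:ℝ) < πD y := (hπD y hy).1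
        field_simp
      rw [Finset.sum_congr rfl heq, ← Finset.mul_sum]
      exact mul_le_mul_of_nonneg_left (hsumY2 m hm) (by positivity)
    have h := V3_block UM UD A B (fun y => (Y m y / (πM m * πD y))^2/2)
      ((1/l2 + g2/l2^2) * ((UM.card:ℝ)/nM) * (πM m)^2)
      (fun y => (1/l1 + g1/l1^2) * ((UD.card:ℝ)/nD) * (πD y)^2)
      (((1/l1 + g1/l1^2) * ((UD.card:ℝ)/nD) / (2 * (πM m)^2)) * ((UD.card:ℝ) * a2))
      hA0 (fun y _ => by positivity) hA hB hq (by positivity)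
    refine h.trans (le_of_eq ?_)
    have hπm0 : πM m ≠ 0 := ne_of_gt hπm
    field_simp
  -- pointwise bound and sum splitting
  have hkey : |∑ i ∈ UM, ∑ j ∈ UM, ∑ k ∈ UD, ∑ l ∈ UD,
        (π2M i j - πM i * πM j) * (π2D k l - πD k * πD l)
          * (Y i k / (πM i * πD k)) * (Y j l / (πM j * πD l))|
      ≤ (∑ i ∈ UM, ∑ j ∈ UM, ∑ k ∈ UD, ∑ l ∈ UD,
          |π2M i j - πM i * πM j| * (|π2D k l - πD k * πD l|
            * ((Y i k / (πM i * πD k))^2/2)))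
        + (∑ i ∈ UM, ∑ j ∈ UM, ∑ k ∈ UD, ∑ l ∈ UD,
          |π2M i j - πM i * πM j| * (|π2D k l - πD k * πD l|
            * ((Y j l / (πM j * πD l))^2/2))) := by
    rw [← Finset.sum_add_distrib]
    refine (Finset.abs_sum_le_sum_abs _ _).trans (Finset.sum_le_sum fun i _ => ?_)
    rw [← Finset.sum_add_distrib]
    refine (Finset.abs_sum_le_sum_abs _ _).trans (Finset.sum_le_sum fun j _ => ?_)
    rw [← Finset.sum_add_distrib]
    refine (Finset.abs_sum_le_sum_abs _ _).trans (Finset.sum_le_sum fun k _ => ?_)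
    rw [← Finset.sum_add_distrib]
    refine (Finset.abs_sum_le_sum_abs _ _).trans (Finset.sum_le_sum fun l _ => ?_)
    set A := π2M i j - πM i * πM j
    set B := π2D k l - πD k * πD l
    set c := Y i k / (πM i * πD k)
    set d := Y j l / (πM j * πD l)
    have h2 : |c| * |d| ≤ (c^2 + d^2)/2 := by
      nlinarith [sq_nonneg (|c| - |d|), sq_abs c, sq_abs d]
    calc |A * B * c * d| = (|A| * |B|) * (|c| * |d|) := by
          rw [abs_mul, abs_mul, abs_mul]; ring
      _ ≤ (|A| * |B|) * ((c^2 + d^2)/2) :=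
          mul_le_mul_of_nonneg_left h2 (by positivity)
      _ = |A| * (|B| * (c^2/2)) + |A| * (|B| * (d^2/2)) := by ring
  -- bound T1
  have hT1 : ∑ i ∈ UM, ∑ j ∈ UM, ∑ k ∈ UD, ∑ l ∈ UD,
        |π2M i j - πM i * πM j| * (|π2D k l - πD k * πD l|
          * ((Y i k / (πM i * πD k))^2/2))
      ≤ (UM.card:ℝ) * ((1/l2 + g2/l2^2) * (1/l1 + g1/l1^2)
          * ((UM.card:ℝ)/nM) * ((UD.card:ℝ)/nD) * ((UD.card:ℝ) * a2) / 2) := by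
    calc ∑ i ∈ UM, ∑ j ∈ UM, ∑ k ∈ UD, ∑ l ∈ UD,
          |π2M i j - πM i * πM j| * (|π2D k l - πD k * πD l|
            * ((Y i k / (πM i * πD k))^2/2))
        ≤ UM.card • ((1/l2 + g2/l2^2) * (1/l1 + g1/l1^2)
            * ((UM.card:ℝ)/nM) * ((UD.card:ℝ)/nD) * ((UD.card:ℝ) * a2) / 2) := by
          refine Finset.sum_le_card_nsmul _ _ _ (fun i hi => ?_)
          exact hblock i hi (fun j => |π2M i j - πM i * πM j|) (fun j _ => abs_nonneg _)
            (hrowM i hi) (fun k l => |π2D k l - πD k * πD l|) hrowD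
      _ = (UM.card:ℝ) * ((1/l2 + g2/l2^2) * (1/l1 + g1/l1^2)
            * ((UM.card:ℝ)/nM) * ((UD.card:ℝ)/nD) * ((UD.card:ℝ) * a2) / 2) := by
          rw [nsmul_eq_mul]
  -- bound T2 (after reordering sums)
  have hT2eq : ∑ i ∈ UM, ∑ j ∈ UM, ∑ k ∈ UD, ∑ l ∈ UD,
        |π2M i j - πM i * πM j| * (|π2D k l - πD k * πD l|
          * ((Y j l / (πM j * πD l))^2/2))
      = ∑ j ∈ UM, ∑ i ∈ UM, ∑ l ∈ UD, ∑ k ∈ UD,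
        |π2M i j - πM i * πM j| * (|π2D k l - πD k * πD l|
          * ((Y j l / (πM j * πD l))^2/2)) := by
    rw [Finset.sum_comm]
    exact Finset.sum_congr rfl fun j _ => Finset.sum_congr rfl fun i _ => Finset.sum_comm
  have hT2 : ∑ i ∈ UM, ∑ j ∈ UM, ∑ k ∈ UD, ∑ l ∈ UD,
        |π2M i j - πM i * πM j| * (|π2D k l - πD k * πD l|
          * ((Y j l / (πM j * πD l))^2/2))
      ≤ (UM.card:ℝ) * ((1/l2 + g2/l2^2) * (1/l1 + g1/l1^2)
          * ((UM.card:ℝ)/nM) * ((UD.card:ℝ)/nD) * ((UD.card:ℝ) * a2) / 2) := by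
    rw [hT2eq]
    calc ∑ j ∈ UM, ∑ i ∈ UM, ∑ l ∈ UD, ∑ k ∈ UD,
          |π2M i j - πM i * πM j| * (|π2D k l - πD k * πD l|
            * ((Y j l / (πM j * πD l))^2/2))
        ≤ UM.card • ((1/l2 + g2/l2^2) * (1/l1 + g1/l1^2)
            * ((UM.card:ℝ)/nM) * ((UD.card:ℝ)/nD) * ((UD.card:ℝ) * a2) / 2) := by
          refine Finset.sum_le_card_nsmul _ _ _ (fun j hj => ?_)
          exact hblock j hj (fun i => |π2M i j - πM i * πM j|) (fun i _ => abs_nonneg _)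
            (hcolM j hj) (fun l k => |π2D k l - πD k * πD l|) hcolD
      _ = (UM.card:ℝ) * ((1/l2 + g2/l2^2) * (1/l1 + g1/l1^2)
            * ((UM.card:ℝ)/nM) * ((UD.card:ℝ)/nD) * ((UD.card:ℝ) * a2) / 2) := by
          rw [nsmul_eq_mul]
  -- combine
  have hcomb : |∑ i ∈ UM, ∑ j ∈ UM, ∑ k ∈ UD, ∑ l ∈ UD,
        (π2M i j - πM i * πM j) * (π2D k l - πD k * πD l)
          * (Y i k / (πM i * πD k)) * (Y j l / (πM j * πD l))|
      ≤ ((1/l2 + g2/l2^2) * (1/l1 + g1/l1^2) * a2)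
          * (UD.card:ℝ)^2 * (UM.card:ℝ)^2 / ((nM:ℝ) * (nD:ℝ)) := by
    refine (hkey.trans (add_le_add hT1 hT2)).trans (le_of_eq ?_)
    field_simp
    ring
  refine hcomb.trans ?_
  have hK : (0:ℝ) < (1/l2 + g2/l2^2) * (1/l1 + g1/l1^2) := by positivity
  have h1 : (1/l2 + g2/l2^2) * (1/l1 + g1/l1^2) * a2
      ≤ (1/l2 + g2/l2^2) * (1/l1 + g1/l1^2) * (a2 + 1) := by nlinarith
  gcongr ?_ * _ * _ / _
end
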